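/- Let f : ℂ → ℂ be an entire function and let 0 < s < t. Then log(t/s) · S(f, D(0,t)) ≥ m(t,f) − m(s,f) − log 2. -/

import Mathlib

open MeasureTheory

/-- The spherical area `S(f, U) = (1/π) ∫_U |f'|²/(1+|f|²)² dA`. -/
noncomputable def sphArea (f : ℂ → ℂ) (U : Set ℂ) : ℝ :=
  (1 / Real.pi) * ∫ z in U, ‖deriv f z‖ ^ 2 / (1 + ‖f z‖ ^ 2) ^ 2

/-- The positive part of the logarithm, `log⁺ x = max (log x) 0`. -/
noncomputable def posLog (x : ℝ) : ℝ := max (Real.log x) 0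

/-- The Nevanlinna proximity function
`m(r, f) = (1/2π) ∫₀^{2π} log⁺ |f(r e^{iθ})| dθ`. -/
noncomputable def proximity (f : ℂ → ℂ) (r : ℝ) : ℝ :=
  (1 / (2 * Real.pi)) *
    ∫ θ in (0 : ℝ)..(2 * Real.pi), posLog ‖f (r * Complex.exp (θ * Complex.I))‖

/-!
Put `u = log √(1 + |f|²)`. Then `log⁺ |f| ≤ u ≤ log⁺ |f| + ½ log 2`, so it suffices to bound the
growth of the circle average `A(r)` of `u`. Since `Δu = 2 |f'|² / (1 + |f|²)²`, Green's formula in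
polar coordinates gives `r A'(r) = S(f, D(0,r))`: the flux `r ∫ ∂ᵣu dθ` of `∇u` through the
circle has derivative `r ∫ Δu dθ`, because `∂ᵣ(r ∂ᵣu) + r⁻¹ ∂²_θ u = r Δu` and `∫ ∂²_θ u dθ = 0`
by periodicity. As `S(f, D(0,r))` increases with `r`, `A(t) - A(s) ≤ S(f, D(0,t)) log (t / s)`.
-/

open Complex Set
open scoped Real InnerProductSpace

theorem hasDerivAt_intervalIntegral_of_continuous {E : Type*} [NormedAddCommGroup E]
    [NormedSpace ℝ E] {F F' : ℝ → ℝ → E} (hF : Continuous F.uncurry)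
    (hF' : Continuous F'.uncurry) (hd : ∀ x θ, HasDerivAt (F · θ) (F' x θ) x) (a b x₀ : ℝ) :
    HasDerivAt (fun x => ∫ θ in a..b, F x θ) (∫ θ in a..b, F' x₀ θ) x₀ := by
  obtain ⟨C, hC⟩ := (isCompact_closedBall x₀ 1 |>.prod isCompact_uIcc).exists_bound_of_continuousOn
    hF'.continuousOn
  refine (intervalIntegral.hasDerivAt_integral_of_dominated_loc_of_deriv_le
    (bound := fun _ => C) (Metric.ball_mem_nhds x₀ one_pos) ?_ ?_ ?_ ?_ intervalIntegrable_const
    ?_).2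
  · exact .of_forall fun x => (hF.comp (Continuous.prodMk_right x)).aestronglyMeasurable.restrict
  · exact (hF.comp (Continuous.prodMk_right x₀)).intervalIntegrable a b
  · exact (hF'.comp (Continuous.prodMk_right x₀)).aestronglyMeasurable.restrict
  · exact .of_forall fun θ hθ x hx =>
      hC (x, θ) ⟨Metric.ball_subset_closedBall hx, uIoc_subset_uIcc hθ⟩
  · exact .of_forall fun θ _ x _ => hd x θ

theorem hasDerivAt_circleMap_radius (c : ℂ) (R θ : ℝ) :
    HasDerivAt (fun R => circleMap c R θ) (circleMap 0 1 θ) R := by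
  simpa [circleMap] using ((hasDerivAt_id R).ofReal_comp.mul_const (exp (θ * I))).const_add c

theorem circleMap_zero_eq_mul (R θ : ℝ) : circleMap 0 R θ = R * circleMap 0 1 θ := by
  simp [circleMap]

theorem setIntegral_ball_zero_eq_intervalIntegral {E : Type*} [NormedAddCommGroup E]
    [NormedSpace ℝ E] [CompleteSpace E] {g : ℂ → E} (hg : Continuous g) {r : ℝ} (hr : 0 ≤ r) :
    ∫ z in Metric.ball 0 r, g z = ∫ ρ in 0..r, ρ • ∫ θ in 0..2 * π, g (circleMap 0 ρ θ) := by
  set G : ℝ × ℝ → E := fun p => p.1 • g (circleMap 0 p.1 p.2)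
  have hsymm (p : ℝ × ℝ) : Complex.polarCoord.symm p = circleMap 0 p.1 p.2 := by
    simp [circleMap, Complex.exp_mul_I, ← Complex.ofReal_cos, ← Complex.ofReal_sin]
  have hpolar : ∫ z in Metric.ball 0 r, g z = ∫ p in Ioo 0 r ×ˢ Ioo (-π) π, G p := by
    have hball : EqOn
        (fun p : ℝ × ℝ => p.1 • (Metric.ball 0 r).indicator g (Complex.polarCoord.symm p))
        ((Iio r ×ˢ univ).indicator G) polarCoord.target := by
      intro p hp
      have hmem : Complex.polarCoord.symm p ∈ Metric.ball 0 r ↔ p ∈ Iio r ×ˢ univ := by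
        simp [hsymm, abs_of_pos (show 0 < p.1 from hp.1)]
      dsimp only
      by_cases hlt : p ∈ Iio r ×ˢ univ
      · rw [indicator_of_mem (hmem.2 hlt), indicator_of_mem hlt, hsymm]
      · rw [indicator_of_notMem (mt hmem.1 hlt), indicator_of_notMem hlt, smul_zero]
    have hset : polarCoord.target ∩ (Iio r ×ˢ univ) = Ioo 0 r ×ˢ Ioo (-π) π := by
      ext p
      simp only [polarCoord_target, mem_inter_iff, mem_prod, mem_Ioi, mem_Ioo, mem_Iio, mem_univ]
      tauto
    rw [← integral_indicator Metric.isOpen_ball.measurableSet,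
      ← Complex.integral_comp_polarCoord_symm,
      setIntegral_congr_fun polarCoord.open_target.measurableSet hball,
      setIntegral_indicator (measurableSet_Iio.prod .univ), hset]
  have hG : IntegrableOn G (Ioo 0 r ×ˢ Ioo (-π) π) (volume.prod volume) := by
    rw [← Measure.volume_eq_prod]
    exact ((by fun_prop : Continuous G).continuousOn.integrableOn_compact
      (isCompact_Icc.prod isCompact_Icc)).mono_set
      (prod_mono Ioo_subset_Icc_self Ioo_subset_Icc_self)
  have hinner (ρ : ℝ) : ∫ θ in Ioo (-π) π, G (ρ, θ) = ρ • ∫ θ in 0..2 * π, g (circleMap 0 ρ θ) := by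
    have hper := ((periodic_circleMap 0 ρ).comp g).intervalIntegral_add_eq (-π) 0
    rw [show -π + 2 * π = π by ring, zero_add] at hper
    rw [← integral_Ioc_eq_integral_Ioo,
      ← intervalIntegral.integral_of_le (by linarith [Real.pi_pos]), intervalIntegral.integral_smul]
    exact congrArg (ρ • ·) hper
  rw [hpolar, Measure.volume_eq_prod, setIntegral_prod G hG,
    setIntegral_congr_fun measurableSet_Ioo fun ρ _ => hinner ρ, ← integral_Ioc_eq_integral_Ioo,
    ← intervalIntegral.integral_of_le hr]

theorem sub_le_mul_log_div_of_mul_deriv_le {F F' : ℝ → ℝ} {s t C : ℝ} (hs : 0 < s) (hst : s ≤ t)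
    (hF : ∀ ρ ∈ Icc s t, HasDerivAt F (F' ρ) ρ) (hC : ∀ ρ ∈ Icc s t, ρ * F' ρ ≤ C) :
    F t - F s ≤ C * Real.log (t / s) := by
  have hpos : ∀ ρ ∈ Icc s t, 0 < ρ := fun ρ hρ => hs.trans_le hρ.1
  have hanti : AntitoneOn (fun ρ => F ρ - C * Real.log ρ) (Icc s t) := by
    refine antitoneOn_of_hasDerivWithinAt_nonpos (convex_Icc s t) (f' := fun ρ => F' ρ - C / ρ)
      ?_ ?_ ?_
    · exact fun ρ hρ => ((hF ρ hρ).continuousAt.sub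
        (continuousAt_const.mul (Real.continuousAt_log (hpos ρ hρ).ne'))).continuousWithinAt
    · intro ρ hρ
      have hρ' := interior_subset hρ
      exact ((hF ρ hρ').sub ((Real.hasDerivAt_log (hpos ρ hρ').ne').const_mul C)).hasDerivWithinAt
        |>.congr_deriv (by ring)
    · intro ρ hρ
      have hρ' := interior_subset hρ
      rw [sub_nonpos, le_div_iff₀ (hpos ρ hρ'), mul_comm]
      exact hC ρ hρ'
  have := hanti ⟨le_rfl, hst⟩ ⟨hst, le_rfl⟩ hst
  dsimp only at this
  rw [Real.log_div (hpos t ⟨hst, le_rfl⟩).ne' hs.ne']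
  linarith

theorem Real.log_one_add_sq_eq_posLog (x : ℝ) : Real.log (1 + x ^ 2) = log⁺ (1 + x ^ 2) :=
  (Real.posLog_eq_log (by rw [abs_of_pos (by positivity)]; linarith [sq_nonneg x])).symm

theorem Real.posLog_le_half_log_one_add_sq (x : ℝ) : log⁺ x ≤ Real.log (1 + x ^ 2) / 2 := by
  have h := Real.posLog_le_posLog (sq_nonneg x) (le_add_of_nonneg_left zero_le_one)
  rw [Real.posLog_pow, ← Real.log_one_add_sq_eq_posLog] at h
  push_cast at h
  linarith

theorem Real.half_log_one_add_sq_le_posLog_add (x : ℝ) :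
    Real.log (1 + x ^ 2) / 2 ≤ log⁺ x + Real.log 2 / 2 := by
  have h := Real.posLog_add (x := 1) (y := x ^ 2)
  rw [Real.posLog_one, Real.posLog_pow, ← Real.log_one_add_sq_eq_posLog] at h
  push_cast at h
  linarith

section sphPotential

variable {f : ℂ → ℂ}

noncomputable def sphPotential (f : ℂ → ℂ) (z : ℂ) : ℝ := Real.log (1 + ‖f z‖ ^ 2) / 2

noncomputable def sphDensity (f : ℂ → ℂ) (z : ℂ) : ℝ := ‖deriv f z‖ ^ 2 / (1 + ‖f z‖ ^ 2) ^ 2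

/- Closed forms of the first two directional derivatives of `sphPotential f`:
`sphPotentialDeriv2 f z v w` differentiates `sphPotentialDeriv f · v` in the direction `w`. -/
noncomputable def sphPotentialDeriv (f : ℂ → ℂ) (z v : ℂ) : ℝ :=
  ⟪f z, deriv f z * v⟫_ℝ / (1 + ‖f z‖ ^ 2)

noncomputable def sphPotentialDeriv2 (f : ℂ → ℂ) (z v w : ℂ) : ℝ :=
  (⟪deriv f z * w, deriv f z * v⟫_ℝ + ⟪f z, deriv (deriv f) z * w * v⟫_ℝ) / (1 + ‖f z‖ ^ 2)
    - 2 * ⟪f z, deriv f z * v⟫_ℝ * ⟪f z, deriv f z * w⟫_ℝ / (1 + ‖f z‖ ^ 2) ^ 2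

lemma one_add_sq_norm_pos (w : ℂ) : 0 < 1 + ‖w‖ ^ 2 := by positivity

lemma hasDerivAt_sphPotential_comp (hf : Differentiable ℂ f) {γ : ℝ → ℂ} {γ' : ℂ} {x : ℝ}
    (hγ : HasDerivAt γ γ' x) :
    HasDerivAt (fun x => sphPotential f (γ x)) (sphPotentialDeriv f (γ x) γ') x := by
  have hfγ : HasDerivAt (fun x => f (γ x)) (deriv f (γ x) * γ') x :=
    (hf (γ x)).hasDerivAt.comp x hγ
  refine ((hfγ.norm_sq.const_add 1).log (one_add_sq_norm_pos _).ne' |>.div_const 2).congr_deriv ?_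
  rw [sphPotentialDeriv]
  field_simp

lemma hasDerivAt_sphPotentialDeriv_comp (hf : Differentiable ℂ f) {γ ω : ℝ → ℂ} {γ' ω' : ℂ}
    {x : ℝ} (hγ : HasDerivAt γ γ' x) (hω : HasDerivAt ω ω' x) :
    HasDerivAt (fun x => sphPotentialDeriv f (γ x) (ω x))
      (sphPotentialDeriv2 f (γ x) (ω x) γ' + sphPotentialDeriv f (γ x) ω') x := by
  have hfγ : HasDerivAt (fun x => f (γ x)) (deriv f (γ x) * γ') x :=
    (hf (γ x)).hasDerivAt.comp x hγ
  have hf'γ : HasDerivAt (fun x => deriv f (γ x)) (deriv (deriv f) (γ x) * γ') x :=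
    (hf.deriv (γ x)).hasDerivAt.comp x hγ
  refine ((hfγ.inner ℝ (hf'γ.mul hω)).div (hfγ.norm_sq.const_add 1)
    (one_add_sq_norm_pos _).ne').congr_deriv ?_
  have := (one_add_sq_norm_pos (f (γ x))).ne'
  simp only [sphPotentialDeriv2, sphPotentialDeriv, Pi.mul_apply, inner_add_right]
  field_simp
  ring

lemma sphPotentialDeriv_ofReal_mul (z v : ℂ) (r : ℝ) :
    sphPotentialDeriv f z (r * v) = r * sphPotentialDeriv f z v := by
  rw [sphPotentialDeriv, sphPotentialDeriv, mul_left_comm, ← smul_eq_mul (r : ℂ),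
    Complex.coe_smul, inner_smul_right, mul_div_assoc]

lemma sphPotentialDeriv2_ofReal_mul (z v w : ℂ) (r : ℝ) :
    sphPotentialDeriv2 f z v (r * w) = r * sphPotentialDeriv2 f z v w := by
  simp only [sphPotentialDeriv2, Complex.inner, Complex.mul_re, Complex.mul_im, Complex.ofReal_re,
    Complex.ofReal_im, Complex.conj_re, Complex.conj_im]
  ring

/-- The Laplacian of `sphPotential f` is `2 * sphDensity f`. -/
lemma sphPotentialDeriv2_add_mul_I (z v : ℂ) :
    sphPotentialDeriv2 f z v v + sphPotentialDeriv2 f z (v * I) (v * I)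
      = 2 * ‖v‖ ^ 2 * sphDensity f z := by
  have := (one_add_sq_norm_pos (f z)).ne'
  simp only [sphPotentialDeriv2, sphDensity, Complex.inner, Complex.sq_norm,
    Complex.normSq_apply] at this ⊢
  simp only [Complex.mul_re, Complex.mul_im, Complex.conj_re, Complex.conj_im, Complex.I_re,
    Complex.I_im]
  field_simp
  ring

lemma continuous_sphPotential (hf : Differentiable ℂ f) : Continuous (sphPotential f) := by
  have := hf.continuous
  unfold sphPotential
  fun_prop (disch := exact fun x => (one_add_sq_norm_pos _).ne')

lemma continuous_sphDensity (hf : Differentiable ℂ f) : Continuous (sphDensity f) := by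
  have := hf.continuous
  have := hf.deriv.continuous
  unfold sphDensity
  fun_prop (disch := exact fun x => by have := one_add_sq_norm_pos (f x); positivity)

lemma continuous_sphPotentialDeriv_comp (hf : Differentiable ℂ f) {α : Type*} [TopologicalSpace α]
    {z v : α → ℂ} (hz : Continuous z) (hv : Continuous v) :
    Continuous fun x => sphPotentialDeriv f (z x) (v x) := by
  have := hf.continuous
  have := hf.deriv.continuous
  unfold sphPotentialDeriv
  fun_prop (disch := exact fun x => (one_add_sq_norm_pos _).ne')

lemma continuous_sphPotentialDeriv2_comp (hf : Differentiable ℂ f) {α : Type*}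
    [TopologicalSpace α] {z v w : α → ℂ} (hz : Continuous z) (hv : Continuous v)
    (hw : Continuous w) :
    Continuous fun x => sphPotentialDeriv2 f (z x) (v x) (w x) := by
  have := hf.continuous
  have := hf.deriv.continuous
  have := hf.deriv.deriv.continuous
  unfold sphPotentialDeriv2
  fun_prop (disch := exact fun x => by have := one_add_sq_norm_pos (f (z x)); positivity)

/-- The flux of `∇ (sphPotential f)` through the circle of radius `ρ` about `0`. -/
noncomputable def sphFlux (f : ℂ → ℂ) (ρ : ℝ) : ℝ :=
  ∫ θ in 0..2 * π, sphPotentialDeriv f (circleMap 0 ρ θ) (circleMap 0 ρ θ)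

lemma hasDerivAt_integral_sphPotential_circleMap (hf : Differentiable ℂ f) (ρ : ℝ) :
    HasDerivAt (fun ρ => ∫ θ in 0..2 * π, sphPotential f (circleMap 0 ρ θ))
      (∫ θ in 0..2 * π, sphPotentialDeriv f (circleMap 0 ρ θ) (circleMap 0 1 θ)) ρ :=
  hasDerivAt_intervalIntegral_of_continuous
    (F := fun ρ θ => sphPotential f (circleMap 0 ρ θ))
    (F' := fun ρ θ => sphPotentialDeriv f (circleMap 0 ρ θ) (circleMap 0 1 θ))
    ((continuous_sphPotential hf).comp Real.circleMap.continuous)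
    (continuous_sphPotentialDeriv_comp hf Real.circleMap.continuous
      ((continuous_circleMap 0 1).comp continuous_snd))
    (fun ρ θ => hasDerivAt_sphPotential_comp hf (hasDerivAt_circleMap_radius 0 ρ θ)) _ _ _

lemma mul_integral_sphPotentialDeriv_circleMap (ρ : ℝ) :
    ρ * ∫ θ in 0..2 * π, sphPotentialDeriv f (circleMap 0 ρ θ) (circleMap 0 1 θ)
      = sphFlux f ρ := by
  rw [sphFlux, ← intervalIntegral.integral_const_mul]
  congr with θ
  rw [← sphPotentialDeriv_ofReal_mul, ← circleMap_zero_eq_mul]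

/-- `∂²_θ u = D²u(iz, iz) - Du(z)` at `z = ρ e^{iθ}`, and its integral over a period vanishes. -/
lemma integral_sphPotentialDeriv2_circleMap_mul_I (hf : Differentiable ℂ f) (ρ : ℝ) :
    ∫ θ in 0..2 * π, sphPotentialDeriv2 f (circleMap 0 ρ θ) (circleMap 0 ρ θ * I)
      (circleMap 0 ρ θ * I) = sphFlux f ρ := by
  have hderiv (θ : ℝ) : HasDerivAt
      (fun θ => sphPotentialDeriv f (circleMap 0 ρ θ) (circleMap 0 ρ θ * I))
      (sphPotentialDeriv2 f (circleMap 0 ρ θ) (circleMap 0 ρ θ * I) (circleMap 0 ρ θ * I)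
        - sphPotentialDeriv f (circleMap 0 ρ θ) (circleMap 0 ρ θ)) θ := by
    have h := hasDerivAt_sphPotentialDeriv_comp hf (hasDerivAt_circleMap 0 ρ θ)
      ((hasDerivAt_circleMap 0 ρ θ).mul_const I)
    have hII : circleMap 0 ρ θ * I * I = ((-1 : ℝ) : ℂ) * circleMap 0 ρ θ := by
      rw [mul_assoc, I_mul_I]; push_cast; ring
    rw [hII, sphPotentialDeriv_ofReal_mul] at h
    exact h.congr_deriv (by ring)
  have hcont2 : Continuous fun θ => sphPotentialDeriv2 f (circleMap 0 ρ θ)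
      (circleMap 0 ρ θ * I) (circleMap 0 ρ θ * I) :=
    continuous_sphPotentialDeriv2_comp hf (by fun_prop) (by fun_prop) (by fun_prop)
  have hcont1 : Continuous fun θ => sphPotentialDeriv f (circleMap 0 ρ θ) (circleMap 0 ρ θ) :=
    continuous_sphPotentialDeriv_comp hf (by fun_prop) (by fun_prop)
  have hperiodic := intervalIntegral.integral_eq_sub_of_hasDerivAt (a := 0) (b := 2 * π)
    (fun θ _ => hderiv θ) ((hcont2.sub hcont1).intervalIntegrable _ _)
  rw [intervalIntegral.integral_sub (hcont2.intervalIntegrable _ _)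
    (hcont1.intervalIntegrable _ _),
    show circleMap 0 ρ (2 * π) = circleMap 0 ρ 0 by simpa using periodic_circleMap 0 ρ 0,
    sub_self] at hperiodic
  rw [sphFlux]
  linarith

lemma integral_sphPotentialDeriv2_circleMap_add_sphFlux (hf : Differentiable ℂ f) (ρ : ℝ) :
    (∫ θ in 0..2 * π, sphPotentialDeriv2 f (circleMap 0 ρ θ) (circleMap 0 ρ θ) (circleMap 0 ρ θ))
      + sphFlux f ρ = 2 * ρ ^ 2 * ∫ θ in 0..2 * π, sphDensity f (circleMap 0 ρ θ) := by
  have hradial : Continuous fun θ =>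
      sphPotentialDeriv2 f (circleMap 0 ρ θ) (circleMap 0 ρ θ) (circleMap 0 ρ θ) :=
    continuous_sphPotentialDeriv2_comp hf (by fun_prop) (by fun_prop) (by fun_prop)
  have hangular : Continuous fun θ =>
      sphPotentialDeriv2 f (circleMap 0 ρ θ) (circleMap 0 ρ θ * I) (circleMap 0 ρ θ * I) :=
    continuous_sphPotentialDeriv2_comp hf (by fun_prop) (by fun_prop) (by fun_prop)
  rw [← integral_sphPotentialDeriv2_circleMap_mul_I hf, ← intervalIntegral.integral_add
    (hradial.intervalIntegrable _ _) (hangular.intervalIntegrable _ _),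
    ← intervalIntegral.integral_const_mul]
  simp_rw [sphPotentialDeriv2_add_mul_I, norm_circleMap_zero, sq_abs]

lemma hasDerivAt_sphFlux (hf : Differentiable ℂ f) {ρ : ℝ} (hρ : ρ ≠ 0) :
    HasDerivAt (sphFlux f) (2 * ρ * ∫ θ in 0..2 * π, sphDensity f (circleMap 0 ρ θ)) ρ := by
  have hz : Continuous fun p : ℝ × ℝ => circleMap 0 p.1 p.2 := Real.circleMap.continuous
  have he : Continuous fun p : ℝ × ℝ => circleMap 0 1 p.2 :=
    (continuous_circleMap 0 1).comp continuous_snd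
  have h := hasDerivAt_intervalIntegral_of_continuous
    (F := fun ρ θ => sphPotentialDeriv f (circleMap 0 ρ θ) (circleMap 0 ρ θ))
    (F' := fun ρ θ => sphPotentialDeriv2 f (circleMap 0 ρ θ) (circleMap 0 ρ θ) (circleMap 0 1 θ)
      + sphPotentialDeriv f (circleMap 0 ρ θ) (circleMap 0 1 θ))
    (continuous_sphPotentialDeriv_comp hf hz hz)
    ((continuous_sphPotentialDeriv2_comp hf hz hz he).add
      (continuous_sphPotentialDeriv_comp hf hz he))
    (fun ρ θ => hasDerivAt_sphPotentialDeriv_comp hf (hasDerivAt_circleMap_radius 0 ρ θ)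
      (hasDerivAt_circleMap_radius 0 ρ θ)) 0 (2 * π) ρ
  refine h.congr_deriv (mul_left_cancel₀ hρ ?_)
  have hradial : Continuous fun θ =>
      sphPotentialDeriv2 f (circleMap 0 ρ θ) (circleMap 0 ρ θ) (circleMap 0 ρ θ) :=
    continuous_sphPotentialDeriv2_comp hf (by fun_prop) (by fun_prop) (by fun_prop)
  have hflux : Continuous fun θ =>
      sphPotentialDeriv f (circleMap 0 ρ θ) (circleMap 0 ρ θ) :=
    continuous_sphPotentialDeriv_comp hf (by fun_prop) (by fun_prop)
  calc ρ * ∫ θ in 0..2 * π, (sphPotentialDeriv2 f (circleMap 0 ρ θ) (circleMap 0 ρ θ)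
          (circleMap 0 1 θ) + sphPotentialDeriv f (circleMap 0 ρ θ) (circleMap 0 1 θ))
      = (∫ θ in 0..2 * π, sphPotentialDeriv2 f (circleMap 0 ρ θ) (circleMap 0 ρ θ)
          (circleMap 0 ρ θ)) + sphFlux f ρ := by
        rw [sphFlux, ← intervalIntegral.integral_add (hradial.intervalIntegrable _ _)
          (hflux.intervalIntegrable _ _), ← intervalIntegral.integral_const_mul]
        congr with θ
        rw [mul_add, ← sphPotentialDeriv2_ofReal_mul, ← sphPotentialDeriv_ofReal_mul,
          ← circleMap_zero_eq_mul]
    _ = ρ * (2 * ρ * ∫ θ in 0..2 * π, sphDensity f (circleMap 0 ρ θ)) := by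
        rw [integral_sphPotentialDeriv2_circleMap_add_sphFlux hf]
        ring

lemma sphFlux_eq_two_mul_setIntegral_ball (hf : Differentiable ℂ f) {r : ℝ} (hr : 0 ≤ r) :
    sphFlux f r = 2 * ∫ z in Metric.ball 0 r, sphDensity f z := by
  have hflux : Continuous (sphFlux f) :=
    intervalIntegral.continuous_parametric_intervalIntegral_of_continuous'
      (continuous_sphPotentialDeriv_comp hf Real.circleMap.continuous Real.circleMap.continuous)
      _ _
  have hdensity : Continuous fun ρ => 2 * ρ * ∫ θ in 0..2 * π, sphDensity f (circleMap 0 ρ θ) := by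
    have hcont : Continuous (Function.uncurry fun ρ θ => sphDensity f (circleMap 0 ρ θ)) :=
      (continuous_sphDensity hf).comp Real.circleMap.continuous
    have := intervalIntegral.continuous_parametric_intervalIntegral_of_continuous'
      (μ := volume) hcont 0 (2 * π)
    fun_prop
  have hFTC := intervalIntegral.integral_eq_sub_of_hasDerivAt_of_le hr hflux.continuousOn
    (fun ρ hρ => hasDerivAt_sphFlux hf hρ.1.ne') (hdensity.intervalIntegrable 0 r)
  have hzero : sphFlux f 0 = 0 := by simp [sphFlux, sphPotentialDeriv]
  rw [hzero, sub_zero] at hFTC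
  rw [← hFTC, setIntegral_ball_zero_eq_intervalIntegral (continuous_sphDensity hf) hr,
    ← intervalIntegral.integral_const_mul]
  simp only [smul_eq_mul, mul_assoc]

lemma hasDerivAt_circleAverage_sphPotential (hf : Differentiable ℂ f) {r : ℝ} (hr : 0 < r) :
    HasDerivAt (Real.circleAverage (sphPotential f) 0) (sphArea f (Metric.ball 0 r) / r) r := by
  have hav : Real.circleAverage (sphPotential f) 0
      = fun ρ => (2 * π)⁻¹ * ∫ θ in 0..2 * π, sphPotential f (circleMap 0 ρ θ) := by
    funext ρ
    rw [Real.circleAverage_def, smul_eq_mul]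
  rw [hav]
  refine ((hasDerivAt_integral_sphPotential_circleMap hf r).const_mul _).congr_deriv ?_
  rw [eq_div_iff hr.ne', mul_assoc, mul_comm _ r, mul_integral_sphPotentialDeriv_circleMap,
    sphFlux_eq_two_mul_setIntegral_ball hf hr.le, sphArea]
  field_simp
  rfl

lemma sphArea_ball_mono (hf : Differentiable ℂ f) {ρ t : ℝ} (hρt : ρ ≤ t) :
    sphArea f (Metric.ball 0 ρ) ≤ sphArea f (Metric.ball 0 t) := by
  have hint : IntegrableOn (sphDensity f) (Metric.ball 0 t) :=
    ((continuous_sphDensity hf).continuousOn.integrableOn_compact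
      (isCompact_closedBall 0 t)).mono_set Metric.ball_subset_closedBall
  refine mul_le_mul_of_nonneg_left (setIntegral_mono_set hint ?_
    (Metric.ball_subset_ball hρt).eventuallyLE) (by positivity)
  exact .of_forall fun z => by positivity

end sphPotential

lemma proximity_eq_circleAverage (f : ℂ → ℂ) (r : ℝ) :
    proximity f r = Real.circleAverage (fun z => log⁺ ‖f z‖) 0 r := by
  simp [proximity, Real.circleAverage_def, posLog, Real.posLog_apply, max_comm, circleMap_zero]

lemma proximity_le_circleAverage_sphPotential {f : ℂ → ℂ} (hf : Differentiable ℂ f) (r : ℝ) :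
    proximity f r ≤ Real.circleAverage (sphPotential f) 0 r := by
  have := hf.continuous
  rw [proximity_eq_circleAverage]
  exact Real.circleAverage_mono
    (by fun_prop : Continuous fun z => log⁺ ‖f z‖).continuousOn.circleIntegrable'
    (continuous_sphPotential hf).continuousOn.circleIntegrable'
    fun z _ => Real.posLog_le_half_log_one_add_sq ‖f z‖

lemma circleAverage_sphPotential_le_proximity_add {f : ℂ → ℂ} (hf : Differentiable ℂ f) (r : ℝ) :
    Real.circleAverage (sphPotential f) 0 r ≤ proximity f r + Real.log 2 / 2 := by
  have := hf.continuous
  have hprox : Continuous fun z => log⁺ ‖f z‖ := by fun_prop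
  rw [proximity_eq_circleAverage, ← Real.circleAverage_const (Real.log 2 / 2) 0 r,
    ← Real.circleAverage_fun_add hprox.continuousOn.circleIntegrable' (by fun_prop)]
  exact Real.circleAverage_mono (continuous_sphPotential hf).continuousOn.circleIntegrable'
    (hprox.add continuous_const).continuousOn.circleIntegrable'
    fun z _ => Real.half_log_one_add_sq_le_posLog_add ‖f z‖

theorem stmt_14 (f : ℂ → ℂ) (hf : Differentiable ℂ f)
    (s t : ℝ) (hs : 0 < s) (hst : s < t) :
    Real.log (t / s) * sphArea f (Metric.ball (0 : ℂ) t) ≥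
      proximity f t - proximity f s - Real.log 2 := by
  have hgrowth : Real.circleAverage (sphPotential f) 0 t - Real.circleAverage (sphPotential f) 0 s
      ≤ sphArea f (Metric.ball 0 t) * Real.log (t / s) :=
    sub_le_mul_log_div_of_mul_deriv_le hs hst.le
      (fun ρ hρ => hasDerivAt_circleAverage_sphPotential hf (hs.trans_le hρ.1))
      (fun ρ hρ => by
        rw [mul_div_cancel₀ _ (hs.trans_le hρ.1).ne']
        exact sphArea_ball_mono hf hρ.2)
  have hupper := proximity_le_circleAverage_sphPotential hf t
  have hlower := circleAverage_sphPotential_le_proximity_add hf s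
  have hlog2 : 0 ≤ Real.log 2 := Real.log_nonneg one_le_two
  rw [ge_iff_le, mul_comm]
  linarith
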